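/- Under the same assumptions (g increasing with |g| < ρ, g^{-1} continuous, f differentiable with f' > 0), 𝓘(u) = 0 if and only if u is an equilibrium, i.e., g(βK(f∘u)(x) + βh) = u(x) for almost every x ∈ Ω, where 𝓘(u) = ∫_Ω [K(f∘u)(x) + h − β^{-1}g^{-1}(u(x))][g(βK(f∘u)(x)+βh) − u(x)] f'(u(x)) dx. -/

import Mathlib

open MeasureTheory

/-!
Writing `u x = g t` and `s = β K(f∘u)(x) + β h`, the integrand of `𝓘(u)` equals
`β⁻¹ f'(u x) (s - t) (g s - g t)`. Monotonicity of `g` makes this nonnegative, and strict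
monotonicity makes it vanish exactly when `g s = u x`; a nonnegative integrable function has
zero integral iff it vanishes almost everywhere.
-/

section OrderedRing

variable {α : Type*} [CommRing α] [LinearOrder α] [IsStrictOrderedRing α] {g : α → α}

theorem Monotone.sub_mul_sub_nonneg (hg : Monotone g) (s t : α) :
    0 ≤ (s - t) * (g s - g t) := by
  rcases le_total s t with hst | hts
  · exact mul_nonneg_of_nonpos_of_nonpos (sub_nonpos.2 hst) (sub_nonpos.2 (hg hst))
  · exact mul_nonneg (sub_nonneg.2 hts) (sub_nonneg.2 (hg hts))

theorem StrictMono.sub_mul_sub_eq_zero_iff (hg : StrictMono g) (s t : α) :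
    (s - t) * (g s - g t) = 0 ↔ s = t := by
  rw [mul_eq_zero, sub_eq_zero, sub_eq_zero, hg.injective.eq_iff, or_self]

end OrderedRing

theorem dissipation_integrand_eq {β : ℝ} (hβ : β ≠ 0) (g : ℝ → ℝ) (k h t a : ℝ) :
    (k + h - β⁻¹ * t) * (g (β * k + β * h) - g t) * a =
      β⁻¹ * a * ((β * k + β * h - t) * (g (β * k + β * h) - g t)) := by
  field_simp

section Dissipation

variable {g ginv : ℝ → ℝ} {β a k h v : ℝ}

theorem dissipation_integrand_nonneg (hg : Monotone g) (hginv : Function.LeftInverse ginv g)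
    (hβ : 0 < β) (ha : 0 < a) (hv : v ∈ Set.range g) :
    0 ≤ (k + h - β⁻¹ * ginv v) * (g (β * k + β * h) - v) * a := by
  obtain ⟨t, rfl⟩ := hv
  rw [hginv t, dissipation_integrand_eq hβ.ne']
  exact mul_nonneg (by positivity) (hg.sub_mul_sub_nonneg _ _)

theorem dissipation_integrand_eq_zero_iff (hg : StrictMono g)
    (hginv : Function.LeftInverse ginv g) (hβ : 0 < β) (ha : 0 < a) (hv : v ∈ Set.range g) :
    (k + h - β⁻¹ * ginv v) * (g (β * k + β * h) - v) * a = 0 ↔ g (β * k + β * h) = v := by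
  obtain ⟨t, rfl⟩ := hv
  rw [hginv t, dissipation_integrand_eq hβ.ne', mul_eq_zero, or_iff_right (by positivity),
    hg.sub_mul_sub_eq_zero_iff, hg.injective.eq_iff]

end Dissipation

theorem stmt16_general {N : ℕ} (Ω : Set (Fin N → ℝ))
    (J : (Fin N → ℝ) → (Fin N → ℝ) → ℝ)
    (g ginv f f' : ℝ → ℝ)
    (β h : ℝ) (hβ : 0 < β)
    (hgmono : StrictMono g)
    (hginv : ∀ x : ℝ, ginv (g x) = x)
    (hf'pos : ∀ x : ℝ, 0 < f' x)
    (u : (Fin N → ℝ) → ℝ)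
    (hurange : ∀ x, u x ∈ Set.range g)
    (hint : IntegrableOn
      (fun x =>
        ((∫ y in Ω, J x y * f (u y)) + h - β⁻¹ * ginv (u x)) *
          (g (β * (∫ y in Ω, J x y * f (u y)) + β * h) - u x) * f' (u x))
      Ω volume) :
    (∫ x in Ω,
        ((∫ y in Ω, J x y * f (u y)) + h - β⁻¹ * ginv (u x)) *
          (g (β * (∫ y in Ω, J x y * f (u y)) + β * h) - u x) * f' (u x)) = 0 ↔
      ∀ᵐ x ∂(volume.restrict Ω),
        g (β * (∫ y in Ω, J x y * f (u y)) + β * h) = u x := by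
  rw [integral_eq_zero_iff_of_nonneg
    (fun x => dissipation_integrand_nonneg hgmono.monotone hginv hβ (hf'pos _) (hurange x)) hint]
  exact Filter.eventually_congr (Filter.Eventually.of_forall fun x =>
    dissipation_integrand_eq_zero_iff hgmono hginv hβ (hf'pos _) (hurange x))

/-- `𝓘(u) = 0` if and only if `u` is an equilibrium, i.e.
`g(βK(f∘u)(x) + βh) = u(x)` for almost every `x ∈ Ω`, where
`𝓘(u) = ∫_Ω [K(f∘u)(x) + h − β⁻¹g⁻¹(u(x))][g(βK(f∘u)(x)+βh) − u(x)] f'(u(x)) dx`. -/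
theorem stmt16 {N : ℕ} (Ω : Set (Fin N → ℝ)) (hΩmeas : MeasurableSet Ω)
    (hΩbd : Bornology.IsBounded Ω)
    (J : (Fin N → ℝ) → (Fin N → ℝ) → ℝ)
    (hJmeas : Measurable (Function.uncurry J))
    (hJnonneg : ∀ x y, 0 ≤ J x y)
    (g ginv f f' : ℝ → ℝ)
    (β h ρ : ℝ) (hβ : 0 < β) (hh : 0 ≤ h) (hρ : 0 < ρ)
    (hgmono : StrictMono g)
    (hgρ : ∀ x : ℝ, g x ∈ Set.Ioo (-ρ) ρ)
    (hginv : ∀ x : ℝ, ginv (g x) = x)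
    (hf' : ∀ x : ℝ, HasDerivAt f (f' x) x)
    (hf'pos : ∀ x : ℝ, 0 < f' x)
    (u : (Fin N → ℝ) → ℝ) (humeas : Measurable u)
    (hu : ∀ x, |u x| ≤ ρ)
    (hurange : ∀ x, u x ∈ Set.range g)
    (hint : IntegrableOn
      (fun x =>
        ((∫ y in Ω, J x y * f (u y)) + h - β⁻¹ * ginv (u x)) *
          (g (β * (∫ y in Ω, J x y * f (u y)) + β * h) - u x) * f' (u x))
      Ω volume) :
    (∫ x in Ω,
        ((∫ y in Ω, J x y * f (u y)) + h - β⁻¹ * ginv (u x)) *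
          (g (β * (∫ y in Ω, J x y * f (u y)) + β * h) - u x) * f' (u x)) = 0 ↔
      ∀ᵐ x ∂(volume.restrict Ω),
        g (β * (∫ y in Ω, J x y * f (u y)) + β * h) = u x :=
  stmt16_general Ω J g ginv f f' β h hβ hgmono hginv hf'pos u hurange hint
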